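/- arXiv:1603.08265 — 2 statements merged into one kernel-verified Lean document; each statement's English description precedes it below -/
import Mathlib

section
/- Let R be a commutative ring with a distinguished subset R_+, and let A be an R-algebra that is free as an R-module with basis b : ι → A whose structure constants all lie in R_+ (i.e. for all i, j ∈ ι, writing b i · b j = Σ_k c^k_{ij} · b k, every coefficient c^k_{ij} lies in R_+). Let I ⊆ A be a two-sided ideal and let J = {i ∈ ι : b i ∈ I}; assume that I equals the R-submodule spanned by {b i : i ∈ J}. Then the images of the basis elements b i for i ∉ J under the projection π : A → A/I form an R-module basis of A/I, and all structure constants of the multiplication of A/I in this basis lie in R_+. -/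
/-!
Restricting basis coordinates to the complement of `J` is a surjection `A → (Jᶜ →₀ R)` whose
kernel is exactly the span of `b '' J`, so it identifies `A ⧸ I` with `Jᶜ →₀ R`. In the
resulting basis the coordinates of the class of `x` are coordinates of `x` itself, so the
structure constants of the quotient are among those of `A`.
-/

namespace Module.Basis

variable {ι R M : Type*} [Ring R] [AddCommGroup M] [Module R M]

theorem ker_lsubtypeDomain_compl_comp_repr (b : Basis ι R M) (s : Set ι) :
    LinearMap.ker (Finsupp.lsubtypeDomain sᶜ ∘ₗ b.repr.toLinearMap) =
      Submodule.span R (b '' s) := by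
  ext x
  simp [b.mem_span_image, Finsupp.lsubtypeDomain_apply, Finsupp.subtypeDomain_eq_zero_iff',
    Set.subset_def, not_imp_comm]

theorem surjective_lsubtypeDomain_compl_comp_repr (b : Basis ι R M) (s : Set ι) :
    Function.Surjective (Finsupp.lsubtypeDomain sᶜ ∘ₗ b.repr.toLinearMap) := by
  classical
  intro f
  exact ⟨b.repr.symm f.extendDomain, by simp [Finsupp.lsubtypeDomain_apply]⟩

noncomputable def quotientSpanImage (b : Basis ι R M) (s : Set ι) :
    Basis {i // i ∉ s} R (M ⧸ Submodule.span R (b '' s)) :=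
  .ofRepr <| (Submodule.quotEquivOfEq _ _ (b.ker_lsubtypeDomain_compl_comp_repr s).symm).trans
    (LinearMap.quotKerEquivOfSurjective _ (b.surjective_lsubtypeDomain_compl_comp_repr s))

@[simp]
theorem quotientSpanImage_repr_mk (b : Basis ι R M) (s : Set ι) (x : M) (k : {i // i ∉ s}) :
    (b.quotientSpanImage s).repr (Submodule.Quotient.mk x) k = b.repr x k :=
  rfl

@[simp]
theorem quotientSpanImage_apply (b : Basis ι R M) (s : Set ι) (i : {i // i ∉ s}) :
    b.quotientSpanImage s i = Submodule.Quotient.mk (b i) := by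
  refine (b.quotientSpanImage s).repr.injective (Finsupp.ext fun k => ?_)
  simp [Finsupp.single_apply_left Subtype.val_injective]

end Module.Basis

theorem positive_basis_quotient_general {R : Type*} [CommRing R] (Rp : Set R)
    {ι : Type*} {A : Type*} [Ring A] [Algebra R A] (b : Module.Basis ι R A)
    (hpos : ∀ i j k, b.repr (b i * b j) k ∈ Rp)
    (I : Submodule R A)
    (J : Set ι)
    (hspan : I = Submodule.span R (b '' J)) :
    ∃ b' : Module.Basis {i : ι // i ∉ J} R (A ⧸ I),
      (∀ i : {i : ι // i ∉ J}, b' i = Submodule.Quotient.mk (b i)) ∧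
      (∀ i j k : {i : ι // i ∉ J},
        b'.repr (Submodule.Quotient.mk (b i * b j)) k ∈ Rp) := by
  subst hspan
  exact ⟨b.quotientSpanImage J, b.quotientSpanImage_apply J, fun i j k => hpos i j k⟩

/-- Positive bases descend to quotients by ideals that respect the basis.
`A` is an `R`-algebra, free as an `R`-module with basis `b` whose structure
constants all lie in `Rp`.  `I` is a two-sided ideal (an `R`-submodule closed
under left and right multiplication by `A`), `J = {i | b i ∈ I}`, and `I` is
spanned by `{b i | i ∈ J}`.  Then the images of the `b i`, `i ∉ J`, form an
`R`-basis of `A/I` in which all structure constants of the multiplication of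
`A/I` lie in `Rp`. -/
theorem positive_basis_quotient {R : Type*} [CommRing R] (Rp : Set R)
    {ι : Type*} {A : Type*} [Ring A] [Algebra R A] (b : Module.Basis ι R A)
    (hpos : ∀ i j k, b.repr (b i * b j) k ∈ Rp)
    (I : Submodule R A)
    (hleft : ∀ a : A, ∀ x ∈ I, a * x ∈ I)
    (hright : ∀ a : A, ∀ x ∈ I, x * a ∈ I)
    (J : Set ι) (hJ : J = {i : ι | b i ∈ I})
    (hspan : I = Submodule.span R (b '' J)) :
    ∃ b' : Module.Basis {i : ι // i ∉ J} R (A ⧸ I),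
      (∀ i : {i : ι // i ∉ J}, b' i = Submodule.Quotient.mk (b i)) ∧
      (∀ i j k : {i : ι // i ∉ J},
        b'.repr (Submodule.Quotient.mk (b i * b j)) k ∈ Rp) :=
  positive_basis_quotient_general Rp b hpos I J hspan
end

section
/- Let R be a commutative ring, q ∈ R an invertible element, and A an R-algebra. Let G ⊆ A be a set that generates A as an R-module, and let α_1, …, α_l ∈ A be elements such that for every i and every g ∈ G there exists an integer k with g · α_i = q^k · (α_i · g). Then the right ideal Σ_{i=1}^{l} α_i · A is a two-sided ideal of A. -/
/-- Let `R` be a commutative ring, `q ∈ Rˣ`, and `A` an `R`-algebra.  Let `G ⊆ A`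
generate `A` as an `R`-module and let `α 1, …, α l ∈ A` be elements such that every
`g ∈ G` `q`-commutes with each `α i`.  Then the right ideal `∑ i, (α i) * A` is a
two-sided ideal of `A`. -/
theorem right_ideal_is_two_sided {R : Type*} [CommRing R] (q : Rˣ)
    {A : Type*} [Ring A] [Algebra R A]
    (G : Set A) (hG : Submodule.span R G = ⊤)
    (l : ℕ) (α : Fin l → A)
    (hcomm : ∀ i : Fin l, ∀ g ∈ G, ∃ k : ℤ,
      g * α i = ((q ^ k : Rˣ) : R) • (α i * g)) :
    ∃ I : TwoSidedIdeal A,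
      (I : Set A) = {x : A | ∃ a : Fin l → A, x = ∑ i, α i * a i} := by
  set S : Set A := {x : A | ∃ a : Fin l → A, x = ∑ i, α i * a i} with hS
  have zero_mem : (0 : A) ∈ S := ⟨0, by simp⟩
  have add_mem : ∀ {x y : A}, x ∈ S → y ∈ S → x + y ∈ S := by
    rintro x y ⟨a, rfl⟩ ⟨b, rfl⟩
    exact ⟨a + b, by simp [mul_add, Finset.sum_add_distrib]⟩
  have neg_mem : ∀ {x : A}, x ∈ S → -x ∈ S := by
    rintro x ⟨a, rfl⟩
    exact ⟨-a, by simp [Finset.sum_neg_distrib]⟩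
  have smul_mem : ∀ (c : R) {x : A}, x ∈ S → c • x ∈ S := by
    rintro c x ⟨a, rfl⟩
    refine ⟨fun i => c • a i, ?_⟩
    rw [Finset.smul_sum]
    exact Finset.sum_congr rfl fun i _ => (mul_smul_comm c (α i) (a i)).symm
  have mul_mem_right : ∀ {x y : A}, x ∈ S → x * y ∈ S := by
    rintro x y ⟨a, rfl⟩
    refine ⟨fun i => a i * y, ?_⟩
    rw [Finset.sum_mul]
    exact Finset.sum_congr rfl fun i _ => mul_assoc _ _ _
  -- the key: left multiplication
  have mul_mem_left : ∀ {x y : A}, y ∈ S → x * y ∈ S := by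
    intro x y hy
    -- show the set of x with this property is a submodule containing G
    let T : Submodule R A :=
      { carrier := {x : A | ∀ y ∈ S, x * y ∈ S}
        zero_mem' := fun y hy => by simpa using zero_mem
        add_mem' := fun {u v} hu hv y hy => by
          rw [add_mul]; exact add_mem (hu y hy) (hv y hy)
        smul_mem' := fun c u hu y hy => by
          rw [smul_mul_assoc]; exact smul_mem c (hu y hy) }
    have hGT : G ⊆ (T : Set A) := by
      intro g hg
      rintro z ⟨a, rfl⟩
      rw [Finset.mul_sum]
      choose k hk using fun i => hcomm i g hg
      refine ⟨fun i => ((q ^ k i : Rˣ) : R) • (g * a i), ?_⟩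
      refine Finset.sum_congr rfl fun i _ => ?_
      rw [← mul_assoc, hk i, smul_mul_assoc, mul_assoc, mul_smul_comm]
    have : x ∈ T := by
      have : (⊤ : Submodule R A) ≤ T := hG ▸ Submodule.span_le.mpr hGT
      exact this Submodule.mem_top
    exact this y hy
  exact ⟨TwoSidedIdeal.mk' S zero_mem add_mem neg_mem mul_mem_left mul_mem_right,
    TwoSidedIdeal.coe_mk' ..⟩
end
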